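/- arXiv:1402.6957 — 5 statements merged into one kernel-verified Lean document; each statement's English description precedes it below -/
import Mathlib

section
/- Let R be a ring and let A, B, C be biuniform right R-modules such that C and A belong to the same monogeny class and C and B belong to the same epigeny class. Then there exists a biuniform right R-module D such that A ⊕ B ≅ C ⊕ D; moreover, D and B belong to the same monogeny class and D and A belong to the same epigeny class. -/
/-!
Write `f : C → A`, `f' : A → C` for the monomorphisms and `p : C → B`, `p' : B → C` for the
epimorphisms. If `f' ∘ f` is onto then `A ≅ C` and `D = B` works; if `p' ∘ p` is one-to-one then
`B ≅ C` and `D = A` works. Otherwise `f' ∘ f` is a monomorphism that is not onto and `p' ∘ p` an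
epimorphism that is not one-to-one, and in the biuniform module `C` their sum
`σ = (f', p') ∘ (f, p)` is an automorphism. Hence `(f, p) : C → A ⊕ B` splits with complement
`D = ker (f', p')`, which is also `coker (f, p)`. The kernel description gives `D ↪ B` and
`D ↠ A`, the cokernel description gives `B ↪ D` and `A ↠ D`, and biuniformity of `D` is
inherited from `B` and `A`.
-/

/-- Two modules belong to the same monogeny class if there are injective homomorphisms
in both directions. -/
def SameMonogenyClass (R : Type*) [Ring R] (M N : Type*) [AddCommGroup M] [Module R M]
    [AddCommGroup N] [Module R N] : Prop :=
  (∃ f : M →ₗ[R] N, Function.Injective f) ∧ ∃ g : N →ₗ[R] M, Function.Injective g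

/-- Two modules belong to the same epigeny class if there are surjective homomorphisms
in both directions. -/
def SameEpigenyClass (R : Type*) [Ring R] (M N : Type*) [AddCommGroup M] [Module R M]
    [AddCommGroup N] [Module R N] : Prop :=
  (∃ f : M →ₗ[R] N, Function.Surjective f) ∧ ∃ g : N →ₗ[R] M, Function.Surjective g

/-- A module is uniform if it is nonzero and any two nonzero submodules intersect
nontrivially. -/
def IsUniformModule (R : Type*) [Ring R] (M : Type*) [AddCommGroup M] [Module R M] : Prop :=
  (∃ x : M, x ≠ 0) ∧ ∀ N P : Submodule R M, N ≠ ⊥ → P ≠ ⊥ → N ⊓ P ≠ ⊥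

/-- A module is couniform (hollow) if it is nonzero and the sum of any two proper
submodules is proper. -/
def IsCouniformModule (R : Type*) [Ring R] (M : Type*) [AddCommGroup M] [Module R M] : Prop :=
  (∃ x : M, x ≠ 0) ∧ ∀ N P : Submodule R M, N ≠ ⊤ → P ≠ ⊤ → N ⊔ P ≠ ⊤

/-- A module is biuniform if it is both uniform and couniform. -/
def IsBiuniformModule (R : Type*) [Ring R] (M : Type*) [AddCommGroup M] [Module R M] : Prop :=
  IsUniformModule R M ∧ IsCouniformModule R M

open Function LinearMap

section Classes

variable {R : Type*} [Ring R] {M N P : Type*} [AddCommGroup M] [Module R M]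
  [AddCommGroup N] [Module R N] [AddCommGroup P] [Module R P]

theorem LinearEquiv.sameMonogenyClass (e : M ≃ₗ[R] N) : SameMonogenyClass R M N :=
  ⟨⟨e, e.injective⟩, e.symm, e.symm.injective⟩

theorem SameMonogenyClass.symm (h : SameMonogenyClass R M N) : SameMonogenyClass R N M :=
  ⟨h.2, h.1⟩

theorem SameMonogenyClass.trans (h₁ : SameMonogenyClass R M N) (h₂ : SameMonogenyClass R N P) :
    SameMonogenyClass R M P := by
  obtain ⟨⟨f, hf⟩, f', hf'⟩ := h₁
  obtain ⟨⟨g, hg⟩, g', hg'⟩ := h₂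
  exact ⟨⟨g ∘ₗ f, hg.comp hf⟩, f' ∘ₗ g', hf'.comp hg'⟩

theorem LinearEquiv.sameEpigenyClass (e : M ≃ₗ[R] N) : SameEpigenyClass R M N :=
  ⟨⟨e, e.surjective⟩, e.symm, e.symm.surjective⟩

theorem SameEpigenyClass.symm (h : SameEpigenyClass R M N) : SameEpigenyClass R N M :=
  ⟨h.2, h.1⟩

theorem SameEpigenyClass.trans (h₁ : SameEpigenyClass R M N) (h₂ : SameEpigenyClass R N P) :
    SameEpigenyClass R M P := by
  obtain ⟨⟨f, hf⟩, f', hf'⟩ := h₁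
  obtain ⟨⟨g, hg⟩, g', hg'⟩ := h₂
  exact ⟨⟨g ∘ₗ f, hg.comp hf⟩, f' ∘ₗ g', hf'.comp hg'⟩

end Classes

section Uniform

variable {R : Type*} [Ring R] {M N : Type*} [AddCommGroup M] [Module R M]
  [AddCommGroup N] [Module R N]

theorem IsUniformModule.of_injective (hN : IsUniformModule R N) (hM : ∃ x : M, x ≠ 0)
    {f : M →ₗ[R] N} (hf : Injective f) : IsUniformModule R M := by
  have map_ne_bot {P : Submodule R M} (hP : P ≠ ⊥) : P.map f ≠ ⊥ := by
    simpa using (Submodule.map_injective_of_injective hf).ne hP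
  refine ⟨hM, fun P Q hP hQ hPQ => hN.2 _ _ (map_ne_bot hP) (map_ne_bot hQ) ?_⟩
  rw [← Submodule.map_inf f hf, hPQ, Submodule.map_bot]

theorem IsCouniformModule.of_surjective (hM : IsCouniformModule R M) (hN : ∃ x : N, x ≠ 0)
    {f : M →ₗ[R] N} (hf : Surjective f) : IsCouniformModule R N := by
  have comap_ne_top {P : Submodule R N} (hP : P ≠ ⊤) : P.comap f ≠ ⊤ := by
    simpa using (Submodule.comap_injective_of_surjective hf).ne hP
  refine ⟨hN, fun P Q hP hQ hPQ => hM.2 _ _ (comap_ne_top hP) (comap_ne_top hQ) ?_⟩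
  have hker : ker f ≤ P.comap f ⊔ Q.comap f := le_sup_of_le_left (Submodule.comap_mono bot_le)
  rw [← sup_eq_left.2 hker, ← Submodule.comap_map_eq, Submodule.map_sup_comap_of_surjective hf,
    hPQ, Submodule.comap_top]

/-- `ker (α + β) ∩ ker β = 0` because `α` is injective, and `ker β ≠ 0`. -/
theorem IsUniformModule.injective_add (hM : IsUniformModule R M) {α β : M →ₗ[R] N}
    (hα : Injective α) (hβ : ¬Injective β) : Injective (α + β) := by
  rw [← ker_eq_bot]
  by_contra h
  refine hM.2 _ _ h (mt ker_eq_bot.1 hβ) (eq_bot_iff.2 fun x hx => ?_)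
  obtain ⟨hx₁, hx₂⟩ := Submodule.mem_inf.1 hx
  rw [mem_ker, LinearMap.add_apply, mem_ker.1 hx₂, add_zero] at hx₁
  exact (Submodule.mem_bot R).2 ((injective_iff_map_eq_zero α).1 hα x hx₁)

/-- `range (α + β) + range α ⊇ range β = N`, and `range α ≠ N`. -/
theorem IsCouniformModule.surjective_add (hN : IsCouniformModule R N) {α β : M →ₗ[R] N}
    (hα : ¬Surjective α) (hβ : Surjective β) : Surjective (α + β) := by
  rw [← range_eq_top]
  by_contra h
  refine hN.2 _ _ h (mt range_eq_top.1 hα) (eq_top_iff.2 fun y _ => ?_)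
  obtain ⟨x, rfl⟩ := hβ y
  rw [show β x = (α + β) x - α x by simp]
  exact sub_mem (Submodule.mem_sup_left (mem_range_self _ x))
    (Submodule.mem_sup_right (mem_range_self α x))

end Uniform

section Splitting

variable {R : Type*} [Ring R] {M N P : Type*} [AddCommGroup M] [Module R M]
  [AddCommGroup N] [Module R N] [AddCommGroup P] [Module R P]

theorem LinearMap.isCompl_range_ker_of_bijective_comp {φ : M →ₗ[R] N} {θ : N →ₗ[R] P}
    (h : Bijective (θ ∘ₗ φ)) : IsCompl (range φ) (ker θ) := by
  let σ := LinearEquiv.ofBijective (θ ∘ₗ φ) h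
  constructor
  · rw [Submodule.disjoint_def]
    rintro _ ⟨c, rfl⟩ hc
    have : c = 0 := h.1 (by simpa using hc)
    simp [this]
  · rw [codisjoint_iff_le_sup]
    intro x _
    have hθ : θ (x - φ (σ.symm (θ x))) = 0 := by
      rw [map_sub, sub_eq_zero]
      exact (σ.apply_symm_apply (θ x)).symm
    simpa using Submodule.add_mem_sup (mem_range_self φ (σ.symm (θ x))) (mem_ker.2 hθ)

end Splitting

section Complement

variable {R : Type*} [Ring R] {A B C : Type v} [AddCommGroup A] [Module R A]
  [AddCommGroup B] [Module R B] [AddCommGroup C] [Module R C]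
  {f : C →ₗ[R] A} {p : C →ₗ[R] B} {f' : A →ₗ[R] C} {p' : B →ₗ[R] C}

theorem injective_snd_comp_subtype_ker_coprod (hf' : Injective f') :
    Injective (snd R A B ∘ₗ (ker (f'.coprod p')).subtype) := by
  rw [injective_iff_map_eq_zero]
  rintro ⟨⟨a, b⟩, hab⟩ (hb : b = 0)
  subst hb
  have ha : a = 0 := (injective_iff_map_eq_zero f').1 hf' a (by simpa using hab)
  simp [ha]

theorem surjective_fst_comp_subtype_ker_coprod (hp' : Surjective p') :
    Surjective (fst R A B ∘ₗ (ker (f'.coprod p')).subtype) := by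
  intro a
  obtain ⟨b, hb⟩ := hp' (-f' a)
  exact ⟨⟨(a, b), by simp [hb]⟩, rfl⟩

theorem injective_mkQ_range_prod_comp_inr (hf : Injective f) :
    Injective ((range (f.prod p)).mkQ ∘ₗ inr R A B) := by
  rw [injective_iff_map_eq_zero]
  intro b hb
  obtain ⟨c, hc⟩ := (Submodule.Quotient.mk_eq_zero _).1 hb
  obtain ⟨hfc, hpc⟩ := Prod.ext_iff.1 hc
  have : c = 0 := (injective_iff_map_eq_zero f).1 hf c hfc
  rw [← show p c = b from hpc, this, map_zero]

theorem surjective_mkQ_range_prod_comp_inl (hp : Surjective p) :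
    Surjective ((range (f.prod p)).mkQ ∘ₗ inl R A B) := by
  intro x
  obtain ⟨⟨a, b⟩, rfl⟩ := Submodule.Quotient.mk_surjective _ x
  obtain ⟨c, rfl⟩ := hp b
  exact ⟨a - f c, (Submodule.Quotient.eq _).2 ⟨-c, by simp⟩⟩

theorem exists_complement_of_bijective_coprod_comp_prod (hA : IsCouniformModule R A)
    (hB : IsUniformModule R B) (hf : Injective f) (hp : Surjective p) (hf' : Injective f')
    (hp' : Surjective p') (hσ : Bijective (f'.coprod p' ∘ₗ f.prod p)) :
    ∃ (D : Type v) (_ : AddCommGroup D) (_ : Module R D),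
      IsBiuniformModule R D ∧
      Nonempty ((A × B) ≃ₗ[R] (C × D)) ∧
      SameMonogenyClass R D B ∧ SameEpigenyClass R D A := by
  have hc := isCompl_range_ker_of_bijective_comp hσ
  let e := Submodule.quotientEquivOfIsCompl _ _ hc
  have hDB := injective_snd_comp_subtype_ker_coprod (p' := p') hf'
  have hDA := surjective_fst_comp_subtype_ker_coprod (f' := f') hp'
  have hBD : Injective (e.toLinearMap ∘ₗ (range (f.prod p)).mkQ ∘ₗ inr R A B) :=
    e.injective.comp (injective_mkQ_range_prod_comp_inr hf)
  have hAD : Surjective (e.toLinearMap ∘ₗ (range (f.prod p)).mkQ ∘ₗ inl R A B) :=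
    e.surjective.comp (surjective_mkQ_range_prod_comp_inl hp)
  have hD : ∃ d : ker (f'.coprod p'), d ≠ 0 := by
    obtain ⟨a, ha⟩ := hA.1
    obtain ⟨d, rfl⟩ := hDA a
    exact ⟨d, by rintro rfl; simp at ha⟩
  refine ⟨ker (f'.coprod p'), _, _, ⟨hB.of_injective hD hDB, hA.of_surjective hD hAD⟩,
    ⟨(Submodule.prodEquivOfIsCompl _ _ hc).symm ≪≫ₗ
      (LinearEquiv.ofInjective _ (hσ.1.of_comp (f := f'.coprod p'))).symm.prodCongr (.refl R _)⟩,
    ⟨⟨_, hDB⟩, _, hBD⟩, ⟨_, hDA⟩, _, hAD⟩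

end Complement

/-- If `A`, `B`, `C` are biuniform modules with `[C]_m = [A]_m` and `[C]_e = [B]_e`, then
there is a biuniform module `D` with `A ⊕ B ≅ C ⊕ D`, `[D]_m = [B]_m` and `[D]_e = [A]_e`. -/
theorem exists_complement_of_biuniform
    {R : Type u} [Ring R] (A B C : Type v)
    [AddCommGroup A] [Module R A] [AddCommGroup B] [Module R B]
    [AddCommGroup C] [Module R C]
    (hA : IsBiuniformModule R A) (hB : IsBiuniformModule R B) (hC : IsBiuniformModule R C)
    (hm : SameMonogenyClass R C A) (he : SameEpigenyClass R C B) :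
    ∃ (D : Type v) (_ : AddCommGroup D) (_ : Module R D),
      IsBiuniformModule R D ∧
      Nonempty ((A × B) ≃ₗ[R] (C × D)) ∧
      SameMonogenyClass R D B ∧ SameEpigenyClass R D A := by
  obtain ⟨⟨f, hf⟩, f', hf'⟩ := id hm
  obtain ⟨⟨p, hp⟩, p', hp'⟩ := id he
  by_cases hff : Surjective (f' ∘ₗ f)
  · let e : A ≃ₗ[R] C := .ofBijective f' ⟨hf', hff.of_comp (g := f)⟩
    exact ⟨B, _, _, hB, ⟨e.prodCongr (.refl R B)⟩, (LinearEquiv.refl R B).sameMonogenyClass,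
      he.symm.trans e.symm.sameEpigenyClass⟩
  by_cases hpp : Injective (p' ∘ₗ p)
  · let e : B ≃ₗ[R] C := .ofBijective p' ⟨hpp.of_comp_right (g := p) hp, hp'⟩
    exact ⟨A, _, _, hA, ⟨LinearEquiv.prodComm R A B ≪≫ₗ e.prodCongr (.refl R A)⟩,
      hm.symm.trans e.symm.sameMonogenyClass, (LinearEquiv.refl R A).sameEpigenyClass⟩
  have hσ : Bijective (f'.coprod p' ∘ₗ f.prod p) := by
    rw [coprod_comp_prod]
    exact ⟨hC.1.injective_add (hf'.comp hf) hpp, hC.2.surjective_add hff (hp'.comp hp)⟩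
  exact exists_complement_of_bijective_coprod_comp_prod hA.2 hB.1 hf hp hf' hp' hσ
end

section
/- Let p be a prime and let ℤ(p^∞) denote the Prüfer p-group, realized as the p-primary component of ℚ/ℤ (the subgroup of ℚ/ℤ of elements annihilated by some power of p). Then the abelian groups ℚ × ∏_{n∈ℕ} ℤ(p^∞) and ∏_{n∈ℕ} ℤ(p^∞) (a countably infinite direct product of copies of ℤ(p^∞)) are isomorphic. -/
/-- The group `ℚ/ℤ`, the quotient of the rationals by the integers. -/
abbrev RatModInt : Type := ℚ ⧸ AddSubgroup.zmultiples (1 : ℚ)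

/-- The Prüfer `p`-group `ℤ(p^∞)`, realized as the `p`-primary component of `ℚ/ℤ`,
i.e. the subgroup of elements annihilated by some power of `p`. -/
def PruferGroup (p : ℕ) [Fact p.Prime] : AddSubgroup RatModInt :=
  AddCommGroup.primaryComponent RatModInt p

/-!
The Prüfer group is divisible, hence so is `P = ∏ₙ ℤ(p^∞)`. The element `(1/pⁿ)ₙ` of `P` has
infinite order, so a homomorphism `ℚ → P` extending `1 ↦ (1/pⁿ)ₙ` is injective, and since `ℚ` is
injective it splits: `P ≃ ℚ × K`. As `P ≃ Pᴺ`, an Eilenberg swindle finishes: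
`ℚ × P ≃ ℚ × ℚᴺ × Kᴺ ≃ ℚᴺ × Kᴺ ≃ Pᴺ ≃ P`.
-/

open Function

namespace AddCommGroup

variable {A : Type*} [AddCommGroup A] [DivisibleBy A ℕ] {p : ℕ} [hp : Fact p.Prime]

theorem exists_mem_primaryComponent_nsmul_eq {x : A} (hx : x ∈ primaryComponent A p) {n : ℕ}
    (hn : n ≠ 0) : ∃ y ∈ primaryComponent A p, n • y = x := by
  obtain ⟨a, m, hpm, rfl⟩ := Nat.exists_eq_pow_mul_and_not_dvd hn p hp.out.ne_one
  obtain ⟨k, hk⟩ := hx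
  -- Dividing by `m` is multiplying by an inverse of `m` modulo `p ^ k`,
  -- and every `p ^ a`-th root of a `p`-primary element is again `p`-primary.
  have hm : m.Coprime (addOrderOf x) :=
    ((hp.out.coprime_iff_not_dvd.mpr hpm).symm.pow_right k).coprime_dvd_right
      (addOrderOf_dvd_of_nsmul_eq_zero hk)
  obtain ⟨u, hu⟩ := exists_nsmul_eq_self_of_coprime hm
  obtain ⟨y, hy : p ^ a • y = u • x⟩ :=
    DivisibleBy.surjective_smul A ℕ (pow_ne_zero a hp.out.ne_zero) (u • x)
  refine ⟨y, ⟨a + k, ?_⟩, ?_⟩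
  · rw [pow_add, mul_comm, mul_smul, hy, smul_comm, hk, smul_zero]
  · rw [mul_comm, mul_smul, hy, smul_comm, hu]

noncomputable instance : DivisibleBy (primaryComponent A p) ℕ :=
  divisibleByOfSMulRightSurj _ _ fun hn ⟨_, hx⟩ ↦
    let ⟨y, hy, hyx⟩ := exists_mem_primaryComponent_nsmul_eq hx hn
    ⟨⟨y, hy⟩, Subtype.ext hyx⟩

end AddCommGroup

noncomputable instance (p : ℕ) [Fact p.Prime] : DivisibleBy (PruferGroup p) ℤ :=
  letI := AddGroup.divisibleByNatOfDivisibleByInt ℚ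
  AddGroup.divisibleByIntOfDivisibleByNat (AddCommGroup.primaryComponent RatModInt p)

theorem RatModInt.mk_ne_zero_of_pos_of_lt_one {q : ℚ} (h0 : 0 < q) (h1 : q < 1) :
    (q : RatModInt) ≠ 0 := by
  rw [Ne, QuotientAddGroup.eq_zero_iff, AddSubgroup.mem_zmultiples_iff]
  rintro ⟨k, rfl⟩
  rw [zsmul_one] at h0 h1
  have hk0 : 0 < k := by exact_mod_cast h0
  have hk1 : k < 1 := by exact_mod_cast h1
  omega

theorem exists_not_isOfFinAddOrder_pi_pruferGroup (p : ℕ) [hp : Fact p.Prime] :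
    ∃ x : ℕ → PruferGroup p, ¬IsOfFinAddOrder x := by
  have hp0 : (0 : ℚ) < p := by exact_mod_cast hp.out.pos
  refine ⟨fun n ↦ ⟨(((p : ℚ) ^ n)⁻¹ : ℚ), n, ?_⟩, ?_⟩
  · rw [← QuotientAddGroup.mk_nsmul, nsmul_eq_mul, Nat.cast_pow,
      mul_inv_cancel₀ (pow_pos hp0 n).ne']
    exact (QuotientAddGroup.eq_zero_iff _).mpr (AddSubgroup.mem_zmultiples 1)
  rw [isOfFinAddOrder_iff_nsmul_eq_zero]
  rintro ⟨n, hn, hnx⟩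
  -- the `n`-th coordinate of `x` has order `p ^ n > n`
  have hlt : (n : ℚ) * ((p : ℚ) ^ n)⁻¹ < 1 := by
    rw [← div_eq_mul_inv, div_lt_one (pow_pos hp0 n)]
    exact_mod_cast Nat.lt_pow_self hp.out.one_lt
  refine RatModInt.mk_ne_zero_of_pos_of_lt_one
    (mul_pos (by exact_mod_cast hn) (inv_pos.mpr (pow_pos hp0 n))) hlt ?_
  rw [← nsmul_eq_mul, QuotientAddGroup.mk_nsmul]
  exact congrArg Subtype.val (congrFun hnx n)

section RatHom

variable {B : Type*} [AddCommGroup B]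

theorem AddMonoidHom.injective_of_not_isOfFinAddOrder_map_one (f : ℚ →+ B)
    (h : ¬IsOfFinAddOrder (f 1)) : Injective f := by
  refine (injective_iff_map_eq_zero f).mpr fun q hq ↦ ?_
  have hnum : q.num • f 1 = 0 := by
    rw [← map_zsmul, zsmul_one, ← Rat.mul_den_eq_num, mul_comm, ← nsmul_eq_mul, map_nsmul, hq,
      smul_zero]
  by_contra hq0
  exact h (isOfFinAddOrder_iff_zsmul_eq_zero.mpr ⟨q.num, Rat.num_ne_zero.mpr hq0, hnum⟩)

theorem exists_addMonoidHom_rat_map_one_eq [DivisibleBy B ℤ] (x : B) :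
    ∃ f : ℚ →+ B, f 1 = x := by
  obtain ⟨f, hf⟩ := Module.Baer.extension_property_addMonoidHom (Module.Baer.of_divisible B)
    (Int.castAddHom ℚ) Int.cast_injective (zmultiplesHom B x)
  exact ⟨f, by simpa using DFunLike.congr_fun hf 1⟩

end RatHom

section Swindle

variable {α A B C M : Type*} [AddCommGroup A] [AddCommGroup B] [AddCommGroup C] [AddCommGroup M]

noncomputable def AddMonoidHom.addEquivProdOfLeftInverse (i : A →+ B) (r : B →+ A)
    (h : r.comp i = .id A) : B ≃+ A × (B ⧸ LinearMap.range i.toIntLinearMap) :=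
  ((LinearMap.exact_map_mkQ_range _).splitInjectiveEquiv (Submodule.mkQ_surjective _)
    ⟨r.toIntLinearMap, LinearMap.ext fun x ↦ DFunLike.congr_fun h x⟩).1.toAddEquiv

namespace AddEquiv

def arrowProdEquivProdArrow : (α → A × C) ≃+ (α → A) × (α → C) :=
  mk' (Equiv.arrowProdEquivProdArrow _ _ _) fun _ _ ↦ rfl

def prodNatArrow : M × (ℕ → M) ≃+ (ℕ → M) :=
  (LinearEquiv.piOptionEquivProd ℤ).symm.toAddEquiv.trans
    (arrowCongr (Denumerable.eqv (Option ℕ)) (.refl M))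

def natArrowNatArrow : (ℕ → ℕ → M) ≃+ (ℕ → M) :=
  (mk' (Equiv.curry ℕ ℕ M) fun _ _ ↦ rfl).symm.trans (arrowCongr Nat.pairEquiv (.refl M))

def eilenbergSwindle (e : B ≃+ A × C) (f : (ℕ → B) ≃+ B) : A × B ≃+ B :=
  (prodCongr (.refl A) <| f.symm.trans <| (piCongrRight fun _ ↦ e).trans arrowProdEquivProdArrow)
    |>.trans <| prodAssoc.symm.trans <| (prodCongr prodNatArrow (.refl _)).trans <|
    arrowProdEquivProdArrow.symm.trans <| (piCongrRight fun _ ↦ e.symm).trans f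

end AddEquiv

end Swindle

/-- `ℚ × ∏_{n ∈ ℕ} ℤ(p^∞)` is isomorphic to `∏_{n ∈ ℕ} ℤ(p^∞)`. -/
theorem rat_prod_pi_prufer_equiv_pi_prufer (p : ℕ) [Fact p.Prime] :
    Nonempty ((ℚ × ((n : ℕ) → PruferGroup p)) ≃+ ((n : ℕ) → PruferGroup p)) := by
  obtain ⟨x, hx⟩ := exists_not_isOfFinAddOrder_pi_pruferGroup p
  obtain ⟨i, rfl⟩ := exists_addMonoidHom_rat_map_one_eq x
  obtain ⟨r, hr⟩ := Module.Baer.extension_property_addMonoidHom (Module.Baer.of_divisible ℚ) i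
    (i.injective_of_not_isOfFinAddOrder_map_one hx) (.id ℚ)
  exact ⟨.eilenbergSwindle (i.addEquivProdOfLeftInverse r hr) .natArrowNatArrow⟩
end

section
/- Let p be a prime and let ℤ(p^∞) denote the Prüfer p-group, realized as the p-primary component of ℚ/ℤ. Then the countably infinite direct product ∏_{n∈ℕ} ℤ(p^∞) contains a free abelian subgroup of countably infinite rank; equivalently, there exists an injective group homomorphism from the free abelian group ⨁_{t∈ℕ} ℤ into ∏_{n∈ℕ} ℤ(p^∞). In particular, the divisible abelian group ∏_{n∈ℕ} ℤ(p^∞) has infinite torsion-free rank. -/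
/-!
The `t`-th generator has `n`-th coordinate `1 / p ^ (n * (t + 1))`. Given a relation
`∑ c t • gen t = 0` whose largest index is `T`, multiply the `n`-th coordinate by `p ^ (n * T)`:
this kills every generator with `t < T` and turns the `T`-th one into `1 / p ^ n`, which has
order `p ^ n` in `ℚ/ℤ`. Hence `p ^ n ∣ c T` for every `n`, so `c T = 0`.
-/

namespace RatModInt

theorem addOrderOf_coe_one_div {n : ℕ} (hn : 0 < n) :
    addOrderOf ((1 / n : ℚ) : RatModInt) = n :=
  -- `RatModInt` is definitionally `AddCircle (1 : ℚ)`.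
  haveI : Fact ((0 : ℚ) < 1) := ⟨one_pos⟩
  AddCircle.addOrderOf_period_div hn

theorem zsmul_coe_one_div_eq_zero_iff {n : ℕ} (hn : 0 < n) (c : ℤ) :
    c • ((1 / n : ℚ) : RatModInt) = 0 ↔ (n : ℤ) ∣ c := by
  rw [← addOrderOf_dvd_iff_zsmul_eq_zero, addOrderOf_coe_one_div hn]

theorem nsmul_coe_one_div_mul {a : ℕ} (ha : a ≠ 0) (b : ℕ) :
    a • ((1 / (a * b : ℕ) : ℚ) : RatModInt) = ((1 / b : ℚ) : RatModInt) := by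
  rw [← QuotientAddGroup.mk_nsmul, nsmul_eq_mul, Nat.cast_mul, mul_one_div,
    div_mul_cancel_left₀ (Nat.cast_ne_zero.mpr ha), one_div]

theorem coe_one_div_pow_mem_pruferGroup (p : ℕ) [Fact p.Prime] (k : ℕ) :
    ((1 / (p ^ k : ℕ) : ℚ) : RatModInt) ∈ PruferGroup p :=
  ⟨k, addOrderOf_dvd_iff_nsmul_eq_zero.mp
    (addOrderOf_coe_one_div (pow_pos (Fact.out : p.Prime).pos k)).dvd⟩

end RatModInt

open RatModInt

noncomputable def pruferGen (p t : ℕ) : ℕ → RatModInt :=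
  fun n => ((1 / (p ^ (n * (t + 1)) : ℕ) : ℚ) : RatModInt)

section pruferGen

variable {p : ℕ}

theorem nsmul_pruferGen_of_lt (hp : 0 < p) {t T : ℕ} (h : t < T) (n : ℕ) :
    p ^ (n * T) • pruferGen p t n = 0 := by
  rw [← addOrderOf_dvd_iff_nsmul_eq_zero, pruferGen, addOrderOf_coe_one_div (pow_pos hp _)]
  exact pow_dvd_pow p (Nat.mul_le_mul_left n h)

theorem nsmul_pruferGen_self (hp : 0 < p) (T n : ℕ) :
    p ^ (n * T) • pruferGen p T n = ((1 / (p ^ n : ℕ) : ℚ) : RatModInt) := by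
  rw [pruferGen, Nat.mul_succ, pow_add]
  exact nsmul_coe_one_div_mul (pow_pos hp _).ne' _

theorem pow_dvd_of_linearCombination_pruferGen_eq_zero (hp : 0 < p) {l : ℕ →₀ ℤ}
    (hl : Finsupp.linearCombination ℤ (pruferGen p) l = 0) {T : ℕ} (hT : ∀ t ∈ l.support, t ≤ T)
    (n : ℕ) : (p ^ n : ℤ) ∣ l T := by
  have h := congrArg (fun x => p ^ (n * T) • x n) hl
  simp only [Finsupp.linearCombination_apply, Finsupp.sum, Finset.sum_apply, Pi.smul_apply,
    Finset.smul_sum, Pi.zero_apply, smul_zero] at h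
  rw [Finset.sum_eq_single T] at h
  · rw [smul_comm, nsmul_pruferGen_self hp] at h
    exact_mod_cast (zsmul_coe_one_div_eq_zero_iff (pow_pos hp n) _).mp h
  · intro t ht htT
    rw [smul_comm, nsmul_pruferGen_of_lt hp (lt_of_le_of_ne (hT t ht) htT), smul_zero]
  · intro hT_notMem
    rw [Finsupp.notMem_support_iff.mp hT_notMem, zero_smul, smul_zero]

theorem linearIndependent_pruferGen (hp : 1 < p) : LinearIndependent ℤ (pruferGen p) := by
  rw [linearIndependent_iff]
  intro l hl
  by_contra hl0
  have hs : l.support.Nonempty := Finsupp.support_nonempty_iff.mpr hl0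
  obtain ⟨n, hn⟩ := (Int.finiteMultiplicity_iff (a := p)).mpr
    ⟨by simpa using hp.ne', Finsupp.mem_support_iff.mp (l.support.max'_mem hs)⟩
  exact hn <| mod_cast pow_dvd_of_linearCombination_pruferGen_eq_zero (by omega) hl
    (l.support.le_max' · ·) (n + 1)

end pruferGen

/-- The countably infinite direct product `∏_{n ∈ ℕ} ℤ(p^∞)` contains a free abelian
subgroup of countably infinite rank: there is an injective homomorphism from the free
abelian group `⨁_{t ∈ ℕ} ℤ` into the product. -/
theorem pi_prufer_contains_free_abelian_of_infinite_rank (p : ℕ) [Fact p.Prime] :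
    ∃ f : (ℕ →₀ ℤ) →+ ((n : ℕ) → PruferGroup p), Function.Injective f := by
  let v : ℕ → (n : ℕ) → PruferGroup p := fun t n =>
    ⟨pruferGen p t n, coe_one_div_pow_mem_pruferGroup p _⟩
  have hv : LinearIndependent ℤ v :=
    .of_comp ((PruferGroup p).subtype.compLeft ℕ).toIntLinearMap
      (linearIndependent_pruferGen (Fact.out : p.Prime).one_lt)
  exact ⟨(Finsupp.linearCombination ℤ v).toAddMonoidHom, hv⟩
end

section
/- Let R be a Dedekind domain that is not a field, with field of fractions K. For each maximal ideal P of R, let R_P denote the localization of R at P, regarded as the subring {x ∈ K : x = a/s for some a ∈ R and s ∈ R \ P} of K. Then an element (x_P + R_P)_P of the R-module ∏_P K/R_P, where P ranges over all maximal ideals of R, is a torsion element if and only if x_P ∈ R_P for all but finitely many maximal ideals P; that is, the torsion submodule of ∏_P K/R_P is exactly ⨁_P K/R_P. -/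
/-!
If `r • x = 0` with `r ≠ 0`, then `x_P = 0` whenever `r ∉ P`, because `r` is a unit of `R_P`;
and a nonzero element of a Dedekind domain lies in only finitely many maximal ideals. Conversely
every element of `K / R_P` is killed by a denominator, and the product of these denominators
over the finite support kills `x`.
-/

open nonZeroDivisors

variable {R : Type*} [CommRing R] [IsDomain R] [IsDedekindDomain R]
  {K : Type*} [Field K] [Algebra R K] [IsFractionRing R K]

/-- The localization `R_P` of `R` at a maximal ideal `P`, regarded as an `R`-submodule
(in fact a subring) of the fraction field `K`: the set of elements of `K` of the form
`a/s` with `a ∈ R` and `s ∈ R \ P`. -/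
noncomputable def localizationAt (P : Ideal R) (hP : P.IsMaximal) : Submodule R K :=
  haveI : P.IsPrime := hP.isPrime
  Subalgebra.toSubmodule
    (Localization.subalgebra K P.primeCompl
      (fun x hx => mem_nonZeroDivisors_of_ne_zero fun h0 => hx (h0 ▸ P.zero_mem)))

theorem Submodule.pi_mem_torsion_of_finite_support {ι R : Type*} {M : ι → Type*}
    [CommSemiring R] [∀ i, AddCommMonoid (M i)] [∀ i, Module R (M i)] {x : ∀ i, M i}
    (hfin : {i | x i ≠ 0}.Finite) (hM : ∀ i, Module.IsTorsion R (M i)) :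
    x ∈ torsion R (∀ i, M i) := by
  classical
  choose d hd using fun i => @hM i (x i)
  refine (mem_torsion_iff x).2 ⟨∏ i ∈ hfin.toFinset, d i, funext fun i => ?_⟩
  by_cases hi : x i = 0
  · simp [hi]
  · obtain ⟨c, hc⟩ := Finset.dvd_prod_of_mem d (hfin.mem_toFinset.2 hi)
    rw [Pi.smul_apply, hc, mul_comm, mul_smul, hd, smul_zero, Pi.zero_apply]

theorem Module.isTorsion_quotient_of_algebraMap_mem {R K : Type*} [CommRing R] [CommRing K]
    [Algebra R K] [IsFractionRing R K] {N : Submodule R K} (hN : ∀ a, algebraMap R K a ∈ N) :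
    IsTorsion R (K ⧸ N) := by
  intro q
  obtain ⟨z, rfl⟩ := N.mkQ_surjective q
  obtain ⟨⟨a, s⟩, hs⟩ := IsLocalization.surj R⁰ z
  refine ⟨s, ?_⟩
  rw [Submonoid.smul_def, ← map_smul, Submodule.mkQ_apply, Submodule.Quotient.mk_eq_zero,
    Algebra.smul_def, mul_comm]
  exact hs ▸ hN a

theorem finite_setOf_isMaximal_mem {R : Type*} [CommRing R] [IsDedekindDomain R] {r : R}
    (hr : r ≠ 0) :
    {P : {P : Ideal R // P.IsMaximal} | r ∈ P.1}.Finite := by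
  refine ((Ideal.finite_factors (I := Ideal.span {r}) (by simpa using hr)).image
    fun v => (⟨v.asIdeal, v.isMaximal⟩ : {P : Ideal R // P.IsMaximal})).subset ?_
  rintro P (hrP : r ∈ P.1)
  have hP : P.1 ≠ ⊥ := fun h => hr (by simpa [h] using hrP)
  exact ⟨⟨P.1, P.2.isPrime, hP⟩, Ideal.dvd_span_singleton.2 hrP, rfl⟩

section localizationAt

omit [IsDedekindDomain R]

variable (P : Ideal R) (hP : P.IsMaximal)

theorem algebraMap_mem_localizationAt (a : R) :
    algebraMap R K a ∈ localizationAt P hP :=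
  Subalgebra.algebraMap_mem _ a

theorem inv_algebraMap_mem_localizationAt {r : R} (hr : r ∉ P) :
    (algebraMap R K r)⁻¹ ∈ localizationAt P hP :=
  ⟨1, r, hr, by rw [IsFractionRing.mk'_eq_div, map_one, one_div]⟩

theorem mem_localizationAt_of_smul_mem {r : R} (hr : r ∉ P) {z : K}
    (h : r • z ∈ localizationAt P hP) : z ∈ localizationAt P hP := by
  have hr0 : algebraMap R K r ≠ 0 :=
    (map_ne_zero_iff _ (IsFractionRing.injective R K)).2 fun h0 => hr (h0 ▸ P.zero_mem)
  rw [← inv_mul_cancel_left₀ hr0 z, ← Algebra.smul_def]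
  exact Subalgebra.mul_mem _ (inv_algebraMap_mem_localizationAt P hP hr) h

theorem eq_zero_of_smul_eq_zero_of_notMem {r : R} (hr : r ∉ P)
    {q : K ⧸ localizationAt (K := K) P hP} (h : r • q = 0) : q = 0 := by
  obtain ⟨z, rfl⟩ := Submodule.mkQ_surjective _ q
  rw [← map_smul] at h
  rw [Submodule.mkQ_apply, Submodule.Quotient.mk_eq_zero] at h ⊢
  exact mem_localizationAt_of_smul_mem P hP hr h

end localizationAt

theorem pi_fractionField_mod_localization_torsion_iff_finite_support_general
    (x : (P : {P : Ideal R // P.IsMaximal}) → K ⧸ localizationAt (K := K) P.1 P.2) :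
    (∃ r : R, r ≠ 0 ∧ r • x = 0) ↔ {P : {P : Ideal R // P.IsMaximal} | x P ≠ 0}.Finite := by
  constructor
  · rintro ⟨r, hr0, hrx⟩
    refine (finite_setOf_isMaximal_mem hr0).subset fun P hxP => ?_
    by_contra hrP
    exact hxP (eq_zero_of_smul_eq_zero_of_notMem P.1 P.2 hrP (congrFun hrx P))
  · intro hfin
    have htors : x ∈ Submodule.torsion R _ :=
      Submodule.pi_mem_torsion_of_finite_support hfin fun P =>
        Module.isTorsion_quotient_of_algebraMap_mem (algebraMap_mem_localizationAt P.1 P.2)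
    obtain ⟨⟨r, hr⟩, hrx⟩ := (Submodule.mem_torsion_iff x).1 htors
    exact ⟨r, nonZeroDivisors.ne_zero hr, hrx⟩

/-- Over a Dedekind domain `R` that is not a field, with fraction field `K`, an element of
`∏_P K/R_P` (product over all maximal ideals `P`) is torsion if and only if all but finitely
many of its components vanish, i.e. the torsion submodule of `∏_P K/R_P` is `⨁_P K/R_P`. -/
theorem pi_fractionField_mod_localization_torsion_iff_finite_support
    (hR : ¬IsField R)
    (x : (P : {P : Ideal R // P.IsMaximal}) → K ⧸ localizationAt (K := K) P.1 P.2) :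
    (∃ r : R, r ≠ 0 ∧ r • x = 0) ↔ {P : {P : Ideal R // P.IsMaximal} | x P ≠ 0}.Finite :=
  pi_fractionField_mod_localization_torsion_iff_finite_support_general x
end

section
/- Let p be a prime. Then the abelian groups ℤ_p × ∏_{n≥1} ℤ/p^nℤ and ∏_{n≥1} ℤ/p^nℤ are isomorphic, where ℤ_p is the additive group of the ring of p-adic integers. -/
/-!
Write `P = ∏ₙ ℤ/p^(n+1)` and reindex its factors by `Nat.pair k m`. Reducing the `k`-th
coordinate of `ℤ_p^ℕ` into all factors `ℤ/p^(pair k m + 1)` gives an additive map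
`s : ℤ_p^ℕ → P`. Conversely, lift those factors canonically to `ℤ_p` and take their limit along an
ultrafilter on `m` finer than `atTop`: it exists since `ℤ_p` is compact, and it is additive since
the lifts are additive modulo `p^(pair k m + 1)`, which tends to `0`. This gives `r : P → ℤ_p^ℕ`
with `r ∘ s = id`, a substitute for the pure-injectivity of `ℤ_p`. Hence `P ≃ ℤ_p^ℕ × ker r`, and
the swindle `ℤ_p × ℤ_p^ℕ ≃ ℤ_p^ℕ` absorbs the extra factor `ℤ_p`.
-/

open Filter Topology

section Splitting

variable {A B : Type*} [AddCommGroup A] [AddCommGroup B]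

def AddMonoidHom.addEquivProdKerOfLeftInverse (r : B →+ A) (s : A →+ B)
    (h : ∀ a, r (s a) = a) : B ≃+ A × r.ker where
  toFun b := (r b, ⟨b - s (r b), by simp [h]⟩)
  invFun x := s x.1 + x.2
  left_inv b := by simp
  right_inv := by
    rintro ⟨a, k, hk⟩
    rw [AddMonoidHom.mem_ker] at hk
    ext <;> simp [h, hk]
  map_add' b c := by
    ext
    · simp
    · simp only [map_add, AddSubgroup.coe_add, Prod.snd_add]
      abel

variable (A) in
def AddEquiv.prodPiNatEquivPiNat : A × (ℕ → A) ≃+ (ℕ → A) where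
  toFun x n := Nat.casesOn n x.1 x.2
  invFun f := (f 0, fun n => f (n + 1))
  left_inv _ := rfl
  right_inv f := by funext n; cases n <;> rfl
  map_add' _ _ := by funext n; cases n <;> rfl

theorem nonempty_prod_addEquiv_of_leftInverse (r : B →+ (ℕ → A)) (s : (ℕ → A) →+ B)
    (h : ∀ a, r (s a) = a) : Nonempty (A × B ≃+ B) :=
  let e := r.addEquivProdKerOfLeftInverse s h
  ⟨((AddEquiv.refl A).prodCongr e).trans <| AddEquiv.prodAssoc.symm.trans <|
    ((AddEquiv.prodPiNatEquivPiNat A).prodCongr (AddEquiv.refl r.ker)).trans e.symm⟩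

end Splitting

theorem Ultrafilter.tendsto_limUnder {ι X : Type*} [TopologicalSpace X] [CompactSpace X]
    [Nonempty X] (U : Ultrafilter ι) (f : ι → X) :
    Tendsto f U (𝓝 (limUnder (U : Filter ι) f)) :=
  tendsto_nhds_limUnder ⟨_, (U.map f).le_nhds_lim⟩

theorem Nat.tendsto_pair_add_one (k : ℕ) : Tendsto (fun m => Nat.pair k m + 1) atTop atTop :=
  tendsto_atTop_mono (fun m => (Nat.right_le_pair k m).trans (Nat.le_succ _)) tendsto_id

namespace PadicInt

variable {p : ℕ} [Fact p.Prime]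

theorem toZModPow_natCast_val {n : ℕ} (a : ZMod (p ^ n)) :
    toZModPow n (a.val : ℤ_[p]) = a := by
  rw [map_natCast, ZMod.natCast_zmod_val]

theorem tendsto_sub_nhds_zero_of_toZModPow_eq {ι : Type*} {l : Filter ι} {ν : ι → ℕ}
    (hν : Tendsto ν l atTop) {f g : ι → ℤ_[p]}
    (h : ∀ i, toZModPow (ν i) (f i) = toZModPow (ν i) (g i)) :
    Tendsto (f - g) l (𝓝 0) := by
  have hp : Tendsto (fun n : ℕ => ((p : ℝ)⁻¹) ^ n) atTop (𝓝 0) :=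
    tendsto_pow_atTop_nhds_zero_of_lt_one (by positivity)
      (inv_lt_one_of_one_lt₀ (mod_cast (Fact.out : p.Prime).one_lt))
  refine squeeze_zero_norm (fun i => ?_) (hp.comp hν)
  rw [Function.comp_apply, inv_pow, ← zpow_natCast, ← zpow_neg, norm_le_pow_iff_mem_span_pow,
    ← ker_toZModPow, RingHom.mem_ker, Pi.sub_apply, map_sub, h, sub_self]

section UltrafilterLim

variable {ι : Type*} (U : Ultrafilter ι) {ν : ι → ℕ}

noncomputable def ultrafilterLim (hν : Tendsto ν U atTop) : (∀ i, ZMod (p ^ ν i)) →+ ℤ_[p] where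
  toFun a := limUnder (U : Filter ι) fun i => ((a i).val : ℤ_[p])
  map_zero' := by
    simpa only [Pi.zero_apply, ZMod.val_zero, Nat.cast_zero] using
      (tendsto_const_nhds (x := (0 : ℤ_[p]))).limUnder_eq
  map_add' a b := by
    have hsum := (U.tendsto_limUnder fun i => ((a i).val : ℤ_[p])).add
      (U.tendsto_limUnder fun i => ((b i).val : ℤ_[p]))
    have herr := tendsto_sub_nhds_zero_of_toZModPow_eq hν
      (f := fun i => (((a + b) i).val : ℤ_[p])) (g := fun i => (a i).val + (b i).val)
      (fun i => by simp only [map_add, toZModPow_natCast_val, Pi.add_apply])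
    have hlim := herr.add hsum
    simp only [Pi.sub_apply, sub_add_cancel, zero_add] at hlim
    exact hlim.limUnder_eq

theorem ultrafilterLim_toZModPow (hν : Tendsto ν U atTop) (x : ℤ_[p]) :
    ultrafilterLim U hν (fun i => toZModPow (ν i) x) = x := by
  have hlim := (tendsto_sub_nhds_zero_of_toZModPow_eq hν (g := fun _ => x)
    (fun i => toZModPow_natCast_val (toZModPow (ν i) x))).add_const x
  simp only [Pi.sub_apply, sub_add_cancel, zero_add] at hlim
  exact hlim.limUnder_eq

end UltrafilterLim

variable (p) in
noncomputable def piZModPowOfPi : (ℕ → ℤ_[p]) →+ ((n : ℕ) → ZMod (p ^ (n + 1))) :=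
  AddMonoidHom.pi fun n =>
    (toZModPow (n + 1)).toAddMonoidHom.comp (Pi.evalAddMonoidHom _ n.unpair.1)

variable (p) in
noncomputable def piOfPiZModPow : ((n : ℕ) → ZMod (p ^ (n + 1))) →+ (ℕ → ℤ_[p]) :=
  AddMonoidHom.pi fun k =>
    (ultrafilterLim _ ((Nat.tendsto_pair_add_one k).mono_left (Ultrafilter.of_le atTop))).comp <|
      AddMonoidHom.pi fun m => Pi.evalAddMonoidHom (fun n => ZMod (p ^ (n + 1))) (Nat.pair k m)

theorem piOfPiZModPow_piZModPowOfPi (a : ℕ → ℤ_[p]) :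
    piOfPiZModPow p (piZModPowOfPi p a) = a := by
  funext k
  have hcomp : (fun m => piZModPowOfPi p a (Nat.pair k m)) =
      fun m => toZModPow (Nat.pair k m + 1) (a k) := by
    funext m
    simp [piZModPowOfPi]
  change ultrafilterLim _ ((Nat.tendsto_pair_add_one k).mono_left (Ultrafilter.of_le _))
    (fun m => piZModPowOfPi p a (Nat.pair k m)) = a k
  rw [hcomp, ultrafilterLim_toZModPow]

end PadicInt

/-- `ℤ_p × ∏_{n ≥ 1} ℤ/p^nℤ` is isomorphic to `∏_{n ≥ 1} ℤ/p^nℤ` (the factors being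
indexed here by `n : ℕ`, the `n`-th factor being `ℤ/p^(n+1)ℤ`), where `ℤ_p` is the
additive group of the ring of `p`-adic integers. -/
theorem padicInt_prod_pi_zmod_equiv_pi_zmod (p : ℕ) [Fact p.Prime] :
    Nonempty ((ℤ_[p] × ((n : ℕ) → ZMod (p ^ (n + 1)))) ≃+
      ((n : ℕ) → ZMod (p ^ (n + 1)))) :=
  nonempty_prod_addEquiv_of_leftInverse _ _ PadicInt.piOfPiZModPow_piZModPowOfPi
end
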